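/- Let (h, *) be a right Post-Lie algebra over a field K of characteristic zero, (A₊, ·) a (not necessarily unital) associative K-algebra endowed with a bilinear map ⊳ : A₊ × A₊ → A₊, and φ : h → A₊ a linear map such that for all x, y ∈ h: φ([x,y]) = φ(x)·φ(y) − φ(y)·φ(x) and φ(x*y) = φ(x) ⊳ φ(y). Let A = K·1 ⊕ A₊ be the unitalization, with ⊳ extended by 1 ⊳ x = 0 and x ⊳ 1 = x for x ∈ A₊, and 1 ⊳ 1 = 1. Assume that for all x, y in the subalgebra of A₊ generated by φ(h) and all z ∈ φ(h): (x·y) ⊳ z = (x ⊳ z)·y + x·(y ⊳ z) and x ⊳ (y·z) = (x ⊳ y) ⊳ z − x ⊳ (y ⊳ z). Then there exists a unique algebra morphism Φ : U(h) → A extending φ, and this Φ satisfies, for all f, g, h ∈ U(h): Φ(f*g) = Φ(f) ⊳ Φ(g); (Φ(f)·Φ(g)) ⊳ Φ(h) = (Φ(f) ⊳ Φ(h⁽¹⁾))·(Φ(g) ⊳ Φ(h⁽²⁾)); and (Φ(f) ⊳ Φ(g)) ⊳ Φ(h) = Φ(f) ⊳ ((Φ(g) ⊳ Φ(h⁽¹⁾))·Φ(h⁽²⁾)),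 where * on U(h) is the unique extension of the Post-Lie product and Δ(h) = h⁽¹⁾ ⊗ h⁽²⁾ is the standard coproduct of U(h). -/

import Mathlib

open TensorProduct

/-- `(L, ⁅·,·⁆, m)` is a right Post-Lie algebra. -/
def IsRightPostLie (K : Type*) {L : Type*} [Field K] [LieRing L] [LieAlgebra K L]
    (m : L →ₗ[K] L →ₗ[K] L) : Prop :=
  (∀ x y z : L, m x ⁅y, z⁆
      = (m (m x y) z - m x (m y z)) - (m (m x z) y - m x (m z y)))
  ∧ (∀ x y z : L, m ⁅x, y⁆ z = ⁅m x z, y⁆ + ⁅x, m y z⁆)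

/-- The extension to the unitalization `A = K·1 ⊕ A₊` of a bilinear operation `d` on `A₊`,
determined by `1 ⊳ x = 0`, `x ⊳ 1 = x` and `1 ⊳ 1 = 1`:
`(k·1 + a) ⊳ (l·1 + b) = k l · 1 + l a + a ⊳ b`. -/
noncomputable def uniExt (K : Type*) [Field K] {A : Type*} [NonUnitalRing A] [Module K A]
    [SMulCommClass K A A] [IsScalarTower K A A]
    (d : A →ₗ[K] A →ₗ[K] A) :
    Unitization K A →ₗ[K] Unitization K A →ₗ[K] Unitization K A :=
  LinearMap.mk₂ K
    (fun x y => Unitization.inl (x.fst * y.fst)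
        + Unitization.inr (y.fst • x.snd + d x.snd y.snd))
    (fun x x' y => by
      apply Unitization.ext <;> (simp [add_mul, smul_add, map_add]; try abel))
    (fun c x y => by
      refine Unitization.ext (by simp [mul_assoc]) ?_
      simp [smul_add, map_smul, smul_comm c])
    (fun x y y' => by
      apply Unitization.ext <;> (simp [mul_add, add_smul, map_add]; try abel))
    (fun c x y => by
      refine Unitization.ext (by simp; ring) ?_
      simp [smul_add, map_smul, mul_smul, smul_comm c])

/-! `Φ` is the universal-property lift of `inr ∘ φ`, a Lie map by the bracket hypothesis.
For `Φ (f * g) = Φ f ⊳ Φ g`, induct on the degree of `g` in the filtration `(1 ⊔ ι L) ^ n` of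
`U(L)`. For `g = ι y`, the map `f ↦ f * ι y` is a derivation because `ι y` is primitive, and the
first hypothesis on `⊳` makes `u ↦ u ⊳ φ y` a derivation as well. The step from `g` to `g · ι y`
is the recursion `f * (g · y) = (f * g) * y - f * (g * y)`, matched on the target side by the
second hypothesis; it applies the induction hypothesis to `g * ι y`, which stays in the degree
of `g`. The two Post-Hopf identities are then images under `Φ` of the defining identities of `*`
on `U(L)`. -/

namespace Submodule

variable {R A : Type*} [CommSemiring R] [Semiring A] [Algebra R A]

theorem iSup_one_sup_pow_eq_top {M : Submodule R A} (hM : Algebra.adjoin R (M : Set A) = ⊤) :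
    ⨆ n : ℕ, (1 ⊔ M) ^ n = ⊤ := by
  have hclosure : (Submonoid.closure (M : Set A) : Set A) ⊆ ↑(⨆ n : ℕ, (1 ⊔ M) ^ n) := by
    suffices ∀ a ∈ Submonoid.closure (M : Set A), ∃ n : ℕ, a ∈ (1 ⊔ M) ^ n from
      fun a ha ↦ (this a ha).elim fun n hn ↦ mem_iSup_of_mem n hn
    intro a ha
    induction ha using Submonoid.closure_induction_right with
    | one => exact ⟨0, one_le.mp (pow_zero (1 ⊔ M)).ge⟩
    | mul_right a b _ hb ha =>
      obtain ⟨n, hn⟩ := ha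
      exact ⟨n + 1, pow_succ (1 ⊔ M) n ▸ mul_mem_mul hn (mem_sup_right hb)⟩
  rw [eq_top_iff, ← Algebra.top_toSubmodule, ← hM, Algebra.adjoin_eq_span]
  exact span_le.mpr hclosure

end Submodule

theorem leibniz_of_primitive {R H : Type*} [CommSemiring R] [Semiring H] [Algebra R H]
    (Δ : H →ₐ[R] H ⊗[R] H) (B : H →ₗ[R] H →ₗ[R] H) (hone : ∀ f, B f 1 = f)
    (hmul : ∀ f g u, B (f * g) u = lift ((LinearMap.mul R H).compl₁₂ (B f) (B g)) (Δ u))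
    {p : H} (hp : Δ p = p ⊗ₜ 1 + 1 ⊗ₜ p) (f g : H) :
    B (f * g) p = B f p * g + f * B g p := by
  rw [hmul, hp, map_add, lift.tmul, lift.tmul]
  simp only [LinearMap.compl₁₂_apply, LinearMap.mul_apply', hone]

theorem AlgHom.map_lift_mul_compl₁₂ {R H H' : Type*} [CommSemiring R] [Semiring H] [Algebra R H]
    [Semiring H'] [Algebra R H'] (Φ : H →ₐ[R] H') {F G : H →ₗ[R] H} {F' G' : H' →ₗ[R] H'}
    (hF : ∀ a, Φ (F a) = F' (Φ a)) (hG : ∀ a, Φ (G a) = G' (Φ a)) (t : H ⊗[R] H) :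
    Φ (lift ((LinearMap.mul R H).compl₁₂ F G) t)
      = lift ((LinearMap.mul R H').compl₁₂ F' G') (map Φ.toLinearMap Φ.toLinearMap t) := by
  have : Φ.toLinearMap ∘ₗ lift ((LinearMap.mul R H).compl₁₂ F G)
      = lift ((LinearMap.mul R H').compl₁₂ F' G') ∘ₗ map Φ.toLinearMap Φ.toLinearMap :=
    TensorProduct.ext' fun a b ↦ by simp [hF, hG]
  exact LinearMap.congr_fun this t

namespace UniversalEnvelopingAlgebra

variable {R L : Type*} [CommRing R] [LieRing L] [LieAlgebra R L]

local notation "U" => UniversalEnvelopingAlgebra R L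

attribute [local instance 100] LieRing.ofAssociativeRing

variable (R L) in
@[simp]
theorem adjoin_range_ι :
    Algebra.adjoin R (Set.range (ι R (L := L))) = ⊤ := by
  have : ⇑(ι R (L := L)) = mkAlgHom R L ∘ TensorAlgebra.ι R := rfl
  rw [this, Set.range_comp, ← AlgHom.map_adjoin, TensorAlgebra.adjoin_range_ι, Algebra.map_top,
    AlgHom.range_eq_top, mkAlgHom]
  exact RingCon.mkₐ_surjective _

theorem existsUnique_algHom_ι_eq {A : Type*} [Ring A] [Algebra R A] (ψ : L →ₗ[R] A)
    (hψ : ∀ x y, ψ ⁅x, y⁆ = ψ x * ψ y - ψ y * ψ x) :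
    ∃! Φ : U →ₐ[R] A, ∀ x, Φ (ι R x) = ψ x :=
  let ψ' : L →ₗ⁅R⁆ A := { ψ with map_lie' := hψ _ _ }
  ⟨lift R ψ', lift_ι_apply R ψ', fun Φ hΦ ↦ (lift_unique R ψ' Φ).mp (funext hΦ)⟩

theorem apply_ι_mem_one_sup_pow (m : L →ₗ[R] L →ₗ[R] L) (Δ : U →ₐ[R] U ⊗[R] U)
    (hΔ : ∀ x : L, Δ (ι R x) = ι R x ⊗ₜ[R] (1 : U) + (1 : U) ⊗ₜ[R] ι R x)
    (ε : U →ₐ[R] R) (hε : ∀ x : L, ε (ι R x) = 0) (B : U →ₗ[R] U →ₗ[R] U)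
    (hagree : ∀ x y : L, B (ι R x) (ι R y) = ι R (m x y))
    (hone : ∀ f, B f 1 = f) (hone' : ∀ f, B 1 f = ε f • (1 : U))
    (hmul : ∀ f g u,
      B (f * g) u = TensorProduct.lift ((LinearMap.mul R U).compl₁₂ (B f) (B g)) (Δ u))
    (y : L) (n : ℕ) {a : U} (ha : a ∈ (1 ⊔ LinearMap.range (ι R (L := L)).toLinearMap) ^ n) :
    B a (ι R y) ∈ (1 ⊔ LinearMap.range (ι R (L := L)).toLinearMap) ^ n := by
  set M := LinearMap.range (ι R (L := L)).toLinearMap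
  have hunit : ∀ b ∈ (1 : Submodule R U), B b (ι R y) = 0 := by
    intro b hb
    obtain ⟨c, rfl⟩ := Submodule.mem_one.mp hb
    rw [Algebra.algebraMap_eq_smul_one, map_smul, LinearMap.smul_apply, hone', hε, zero_smul,
      smul_zero]
  have hdeg1 : ∀ b ∈ 1 ⊔ M, B b (ι R y) ∈ M := by
    intro b hb
    obtain ⟨b₀, hb₀, _, ⟨x, rfl⟩, rfl⟩ := Submodule.mem_sup.mp hb
    rw [map_add, LinearMap.add_apply, hunit b₀ hb₀, zero_add]
    exact ⟨m x y, (hagree x y).symm⟩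
  induction n generalizing a with
  | zero =>
    rw [pow_zero] at ha ⊢
    rw [hunit a ha]
    exact zero_mem _
  | succ n ih =>
    rw [pow_succ] at ha ⊢
    refine Submodule.mul_induction_on ha (fun a ha b hb ↦ ?_) fun a b ha hb ↦ ?_
    · rw [leibniz_of_primitive Δ B hone hmul (hΔ y)]
      exact add_mem (Submodule.mul_mem_mul (ih ha) hb)
        (Submodule.mul_mem_mul ha (Submodule.mem_sup_right (hdeg1 b hb)))
    · rw [map_add, LinearMap.add_apply]
      exact add_mem ha hb

end UniversalEnvelopingAlgebra

namespace Unitization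

variable {R A : Type*} [CommSemiring R] [NonUnitalSemiring A] [Module R A]
  [IsScalarTower R A A] [SMulCommClass R A A]

theorem snd_mem_of_mem_adjoin_inr {s : Set A} {u : Unitization R A}
    (hu : u ∈ Algebra.adjoin R (inr '' s)) : u.snd ∈ NonUnitalAlgebra.adjoin R s := by
  induction hu using Algebra.adjoin_induction with
  | mem u hu =>
    obtain ⟨a, ha, rfl⟩ := hu
    exact NonUnitalAlgebra.subset_adjoin R ha
  | algebraMap r =>
    rw [algebraMap_eq_inl, snd_inl]
    exact zero_mem _
  | add u v _ _ hu hv => exact snd_add u v ▸ add_mem hu hv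
  | mul u v _ _ hu hv =>
    rw [snd_mul]
    exact add_mem (add_mem (SMulMemClass.smul_mem _ hv) (SMulMemClass.smul_mem _ hu))
      (mul_mem hu hv)

end Unitization

section uniExt

variable {K A : Type*} [Field K] [NonUnitalRing A] [Module K A] [SMulCommClass K A A]
  [IsScalarTower K A A] (d : A →ₗ[K] A →ₗ[K] A)

@[simp]
theorem uniExt_fst (u v : Unitization K A) : (uniExt K d u v).fst = u.fst * v.fst := by
  simp [uniExt]

@[simp]
theorem uniExt_snd (u v : Unitization K A) :
    (uniExt K d u v).snd = v.fst • u.snd + d u.snd v.snd := by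
  simp [uniExt]

@[simp]
theorem uniExt_one_right (u : Unitization K A) : uniExt K d u 1 = u := by
  ext <;> simp

@[simp]
theorem uniExt_inr_right (u : Unitization K A) (z : A) :
    uniExt K d u (Unitization.inr z) = Unitization.inr (d u.snd z) := by
  ext <;> simp

theorem uniExt_mul_inr {u v : Unitization K A} {z : A}
    (h : d (u.snd * v.snd) z = d u.snd z * v.snd + u.snd * d v.snd z) :
    uniExt K d (u * v) (Unitization.inr z)
      = uniExt K d u (Unitization.inr z) * v + u * uniExt K d v (Unitization.inr z) := by
  ext
  · simp
  · simp only [uniExt_inr_right, Unitization.snd_mul, Unitization.snd_add, Unitization.fst_inr,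
      Unitization.snd_inr, map_add, map_smul, LinearMap.add_apply, LinearMap.smul_apply, h,
      zero_smul, add_zero, zero_add]
    abel

theorem uniExt_mul_inr_right {u v : Unitization K A} {z : A}
    (h : d u.snd (v.snd * z) = d (d u.snd v.snd) z - d u.snd (d v.snd z)) :
    uniExt K d u (v * Unitization.inr z)
      = uniExt K d (uniExt K d u v) (Unitization.inr z)
        - uniExt K d u (uniExt K d v (Unitization.inr z)) := by
  have hv : v * Unitization.inr z = Unitization.inr (v.fst • z + v.snd * z) := by ext <;> simp
  rw [hv, uniExt_inr_right, uniExt_inr_right, uniExt_inr_right, uniExt_inr_right, uniExt_snd,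
    ← Unitization.inr_sub]
  simp only [map_add, map_smul, LinearMap.add_apply, LinearMap.smul_apply, h, add_sub_assoc]

end uniExt

section PostHopf

variable {K L A : Type*} [Field K] [LieRing L] [LieAlgebra K L]
  [NonUnitalRing A] [Module K A] [SMulCommClass K A A] [IsScalarTower K A A]

local notation "U" => UniversalEnvelopingAlgebra K L

open UniversalEnvelopingAlgebra

theorem snd_mem_adjoin_of_map_ι {φ : L →ₗ[K] A} {Φ : U →ₐ[K] Unitization K A}
    (hΦ : ∀ x : L, Φ (ι K x) = Unitization.inr (φ x)) (f : U) :
    (Φ f).snd ∈ NonUnitalAlgebra.adjoin K (Set.range φ) := by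
  refine Unitization.snd_mem_of_mem_adjoin_inr ?_
  have hrange : Φ '' Set.range (ι K (L := L)) = Unitization.inr '' Set.range φ := by
    rw [← Set.range_comp, ← Set.range_comp]
    exact congrArg Set.range (funext hΦ)
  rw [← hrange, ← AlgHom.map_adjoin, adjoin_range_ι]
  exact Subalgebra.mem_map.mpr ⟨f, Algebra.mem_top, rfl⟩

theorem map_apply_ι_eq_uniExt (m : L →ₗ[K] L →ₗ[K] L) (Δ : U →ₐ[K] U ⊗[K] U)
    (hΔ : ∀ x : L, Δ (ι K x) = ι K x ⊗ₜ[K] (1 : U) + (1 : U) ⊗ₜ[K] ι K x)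
    (ε : U →ₐ[K] K) (hε : ∀ x : L, ε (ι K x) = 0) (B : U →ₗ[K] U →ₗ[K] U)
    (hagree : ∀ x y : L, B (ι K x) (ι K y) = ι K (m x y))
    (hone : ∀ f, B f 1 = f) (hone' : ∀ f, B 1 f = ε f • (1 : U))
    (hmul : ∀ f g u,
      B (f * g) u = TensorProduct.lift ((LinearMap.mul K U).compl₁₂ (B f) (B g)) (Δ u))
    (d : A →ₗ[K] A →ₗ[K] A) (φ : L →ₗ[K] A) (hφm : ∀ x y : L, φ (m x y) = d (φ x) (φ y))
    (hyp1 : ∀ x y : A, x ∈ NonUnitalAlgebra.adjoin K (Set.range φ) →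
      y ∈ NonUnitalAlgebra.adjoin K (Set.range φ) → ∀ z ∈ Set.range φ,
        d (x * y) z = d x z * y + x * d y z)
    {Φ : U →ₐ[K] Unitization K A} (hΦ : ∀ x : L, Φ (ι K x) = Unitization.inr (φ x))
    (f : U) (y : L) : Φ (B f (ι K y)) = uniExt K d (Φ f) (Φ (ι K y)) := by
  have hf : f ∈ Algebra.adjoin K (Set.range (ι K (L := L))) := by
    rw [adjoin_range_ι]; exact Algebra.mem_top
  rw [hΦ]
  induction hf using Algebra.adjoin_induction with
  | mem f hf =>
    obtain ⟨x, rfl⟩ := hf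
    rw [hagree, hΦ, hΦ, hφm, uniExt_inr_right, Unitization.snd_inr]
  | algebraMap c =>
    rw [Algebra.algebraMap_eq_smul_one, map_smul, LinearMap.smul_apply, hone', hε]
    ext <;> simp
  | add f g _ _ hf hg => simp only [map_add, LinearMap.add_apply, hf, hg]
  | mul f g _ _ hf hg =>
    rw [leibniz_of_primitive Δ B hone hmul (hΔ y), map_add, map_mul, map_mul, hf, hg, map_mul,
      uniExt_mul_inr d (hyp1 _ _ (snd_mem_adjoin_of_map_ι hΦ f) (snd_mem_adjoin_of_map_ι hΦ g)
        _ ⟨y, rfl⟩)]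

attribute [local instance 100] LieRing.ofAssociativeRing in
theorem map_apply_eq_uniExt (m : L →ₗ[K] L →ₗ[K] L) (Δ : U →ₐ[K] U ⊗[K] U)
    (hΔ : ∀ x : L, Δ (ι K x) = ι K x ⊗ₜ[K] (1 : U) + (1 : U) ⊗ₜ[K] ι K x)
    (ε : U →ₐ[K] K) (hε : ∀ x : L, ε (ι K x) = 0) (B : U →ₗ[K] U →ₗ[K] U)
    (hagree : ∀ x y : L, B (ι K x) (ι K y) = ι K (m x y))
    (hone : ∀ f, B f 1 = f) (hone' : ∀ f, B 1 f = ε f • (1 : U))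
    (hword : ∀ f g (y : L), B f (g * ι K y) = B (B f g) (ι K y) - B f (B g (ι K y)))
    (hmul : ∀ f g u,
      B (f * g) u = TensorProduct.lift ((LinearMap.mul K U).compl₁₂ (B f) (B g)) (Δ u))
    (d : A →ₗ[K] A →ₗ[K] A) (φ : L →ₗ[K] A) (hφm : ∀ x y : L, φ (m x y) = d (φ x) (φ y))
    (hyp1 : ∀ x y : A, x ∈ NonUnitalAlgebra.adjoin K (Set.range φ) →
      y ∈ NonUnitalAlgebra.adjoin K (Set.range φ) → ∀ z ∈ Set.range φ,
        d (x * y) z = d x z * y + x * d y z)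
    (hyp2 : ∀ x y : A, x ∈ NonUnitalAlgebra.adjoin K (Set.range φ) →
      y ∈ NonUnitalAlgebra.adjoin K (Set.range φ) → ∀ z ∈ Set.range φ,
        d x (y * z) = d (d x y) z - d x (d y z))
    {Φ : U →ₐ[K] Unitization K A} (hΦ : ∀ x : L, Φ (ι K x) = Unitization.inr (φ x))
    (f g : U) : Φ (B f g) = uniExt K d (Φ f) (Φ g) := by
  set M := LinearMap.range (ι K (L := L)).toLinearMap
  let S : Submodule K U := ⨅ f, LinearMap.eqLocus (Φ.toLinearMap ∘ₗ B f)
    (uniExt K d (Φ f) ∘ₗ Φ.toLinearMap)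
  have hS : ∀ g, g ∈ S ↔ ∀ f, Φ (B f g) = uniExt K d (Φ f) (Φ g) := by simp [S]
  have hBι := map_apply_ι_eq_uniExt m Δ hΔ ε hε B hagree hone hone' hmul d φ hφm hyp1 hΦ
  suffices ∀ n, (1 ⊔ M) ^ n ≤ S by
    have hM : Algebra.adjoin K (M : Set U) = ⊤ := by
      rw [LinearMap.coe_range, LieHom.coe_toLinearMap]; exact adjoin_range_ι K L
    have hg : g ∈ ⨆ n, (1 ⊔ M) ^ n := by rw [Submodule.iSup_one_sup_pow_eq_top hM]; trivial
    exact (hS g).mp (iSup_le this hg) f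
  intro n
  induction n with
  | zero =>
    intro g hg
    obtain ⟨c, rfl⟩ := Submodule.mem_one.mp hg
    exact (hS _).mpr fun f ↦ by simp [Algebra.algebraMap_eq_smul_one, hone]
  | succ n ih =>
    rw [pow_succ, Submodule.mul_le]
    intro a ha b hb
    obtain ⟨b₀, hb₀, _, ⟨y, rfl⟩, rfl⟩ := Submodule.mem_sup.mp hb
    obtain ⟨c, rfl⟩ := Submodule.mem_one.mp hb₀
    rw [LieHom.coe_toLinearMap, mul_add, ← Algebra.commutes, ← Algebra.smul_def]
    refine add_mem (S.smul_mem c (ih ha)) ((hS _).mpr fun f ↦ ?_)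
    have hdeg := apply_ι_mem_one_sup_pow m Δ hΔ ε hε B hagree hone hone' hmul y n ha
    rw [hword, map_sub, hBι, (hS a).mp (ih ha) f, (hS _).mp (ih hdeg) f, hBι, map_mul, hΦ,
      uniExt_mul_inr_right d (hyp2 _ _ (snd_mem_adjoin_of_map_ι hΦ f)
        (snd_mem_adjoin_of_map_ι hΦ a) _ ⟨y, rfl⟩)]

end PostHopf

theorem statement11 {K L : Type*} [Field K] [LieRing L] [LieAlgebra K L]
    (m : L →ₗ[K] L →ₗ[K] L)
    -- the standard Hopf structure on U(L)
    (Δ : UniversalEnvelopingAlgebra K L →ₐ[K]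
          UniversalEnvelopingAlgebra K L ⊗[K] UniversalEnvelopingAlgebra K L)
    (hΔ : ∀ x : L, Δ (UniversalEnvelopingAlgebra.ι K x)
        = UniversalEnvelopingAlgebra.ι K x ⊗ₜ[K] (1 : UniversalEnvelopingAlgebra K L)
          + (1 : UniversalEnvelopingAlgebra K L) ⊗ₜ[K] UniversalEnvelopingAlgebra.ι K x)
    (ε : UniversalEnvelopingAlgebra K L →ₐ[K] K)
    (hε : ∀ x : L, ε (UniversalEnvelopingAlgebra.ι K x) = 0)
    -- the unique extension `B` of the Post-Lie product `m` to `U(L)`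
    (B : UniversalEnvelopingAlgebra K L →ₗ[K]
          UniversalEnvelopingAlgebra K L →ₗ[K] UniversalEnvelopingAlgebra K L)
    (hagree : ∀ x y : L,
      B (UniversalEnvelopingAlgebra.ι K x) (UniversalEnvelopingAlgebra.ι K y)
        = UniversalEnvelopingAlgebra.ι K (m x y))
    (hone : ∀ f, B f 1 = f)
    (hone' : ∀ f, B 1 f = ε f • (1 : UniversalEnvelopingAlgebra K L))
    (hword : ∀ f g (y : L), B f (g * UniversalEnvelopingAlgebra.ι K y)
        = B (B f g) (UniversalEnvelopingAlgebra.ι K y)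
          - B f (B g (UniversalEnvelopingAlgebra.ι K y)))
    (hmul : ∀ f g u, B (f * g) u
        = TensorProduct.lift
            ((LinearMap.mul K (UniversalEnvelopingAlgebra K L)).compl₁₂ (B f) (B g)) (Δ u))
    (hBB : ∀ f g u, B (B f g) u
        = B f (TensorProduct.lift
            ((LinearMap.mul K (UniversalEnvelopingAlgebra K L)).compl₁₂ (B g) LinearMap.id)
            (Δ u)))
    -- the target nonunital algebra `A₊` with its operation `d = ⊳` and the map `φ`
    {A : Type*} [NonUnitalRing A] [Module K A] [SMulCommClass K A A] [IsScalarTower K A A]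
    (d : A →ₗ[K] A →ₗ[K] A) (φ : L →ₗ[K] A)
    (hφbracket : ∀ x y : L, φ ⁅x, y⁆ = φ x * φ y - φ y * φ x)
    (hφm : ∀ x y : L, φ (m x y) = d (φ x) (φ y))
    (hyp1 : ∀ x y : A, x ∈ NonUnitalAlgebra.adjoin K (Set.range φ) →
      y ∈ NonUnitalAlgebra.adjoin K (Set.range φ) → ∀ z ∈ Set.range φ,
        d (x * y) z = d x z * y + x * d y z)
    (hyp2 : ∀ x y : A, x ∈ NonUnitalAlgebra.adjoin K (Set.range φ) →
      y ∈ NonUnitalAlgebra.adjoin K (Set.range φ) → ∀ z ∈ Set.range φ,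
        d x (y * z) = d (d x y) z - d x (d y z)) :
    (∃! Φ : UniversalEnvelopingAlgebra K L →ₐ[K] Unitization K A,
      ∀ x : L, Φ (UniversalEnvelopingAlgebra.ι K x) = Unitization.inr (φ x))
    ∧ ∀ Φ : UniversalEnvelopingAlgebra K L →ₐ[K] Unitization K A,
        (∀ x : L, Φ (UniversalEnvelopingAlgebra.ι K x) = Unitization.inr (φ x)) →
        (∀ f g, Φ (B f g) = uniExt K d (Φ f) (Φ g))
        ∧ (∀ f g u, uniExt K d (Φ f * Φ g) (Φ u)
            = TensorProduct.lift
                ((LinearMap.mul K (Unitization K A)).compl₁₂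
                  (uniExt K d (Φ f)) (uniExt K d (Φ g)))
                (TensorProduct.map Φ.toLinearMap Φ.toLinearMap (Δ u)))
        ∧ (∀ f g u, uniExt K d (uniExt K d (Φ f) (Φ g)) (Φ u)
            = uniExt K d (Φ f)
                (TensorProduct.lift
                  ((LinearMap.mul K (Unitization K A)).compl₁₂
                    (uniExt K d (Φ g)) LinearMap.id)
                  (TensorProduct.map Φ.toLinearMap Φ.toLinearMap (Δ u)))) := by
  refine ⟨UniversalEnvelopingAlgebra.existsUnique_algHom_ι_eq (Unitization.inrHom K K A ∘ₗ φ)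
    fun x y ↦ by simp [hφbracket], fun Φ hΦ ↦ ?_⟩
  have hB := map_apply_eq_uniExt m Δ hΔ ε hε B hagree hone hone' hword hmul d φ hφm hyp1 hyp2 hΦ
  refine ⟨hB, fun f g u ↦ ?_, fun f g u ↦ ?_⟩
  · rw [← map_mul, ← hB, hmul]
    exact Φ.map_lift_mul_compl₁₂ (hB f) (hB g) (Δ u)
  · rw [← hB, ← hB, hBB, hB]
    exact congrArg _ (Φ.map_lift_mul_compl₁₂ (hB g) (fun _ ↦ rfl) (Δ u))
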